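/- arXiv:1506.02811 — 2 statements merged into one kernel-verified Lean document; each statement's English description precedes it below -/
import Mathlib

section
/- Let k and k′ be positive integers with k, k′ ≤ n. If d ≥ k·(⌈n/k⌉ choose 2), then with probability one there exists a unit vector s ∈ S^{d-1} such that the chromatic number of Γ(X_n, s) is at most k. If d ≥ (k′ choose 2), then with probability one there exists a unit vector s ∈ S^{d-1} such that the chromatic number of Γ(X_n, s) is at least k′. -/
open MeasureTheory ProbabilityTheory Real Filter

/-- The standard Gaussian measure on `ℝ^d`. -/
noncomputable def stdGaussian (d : ℕ) : Measure (EuclideanSpace ℝ (Fin d)) :=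
  (Measure.pi fun _ : Fin d => gaussianReal 0 1).map
    (MeasurableEquiv.toLp 2 (Fin d → ℝ))

/-- The law of the family `X_n = (X_{i,j})` of i.i.d. standard Gaussian vectors in `ℝ^d`
(indexed by all ordered pairs; the graph below only uses the values at pairs `i < j`). -/
noncomputable def edgeMeasure (n d : ℕ) :
    Measure (Fin n → Fin n → EuclideanSpace ℝ (Fin d)) :=
  Measure.pi fun _ : Fin n => Measure.pi fun _ : Fin n => stdGaussian d

/-- The random graph `Γ(X_n, s, t)`: vertex set `{1,…,n}`, with `i ~ j` (for `i < j`) iff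
`⟨X_{i,j}, s⟩ ≥ t`. -/
noncomputable def Gamma {n d : ℕ} (X : Fin n → Fin n → EuclideanSpace ℝ (Fin d))
    (s : EuclideanSpace ℝ (Fin d)) (t : ℝ) : SimpleGraph (Fin n) where
  Adj i j := i ≠ j ∧ t ≤ inner ℝ (if i < j then X i j else X j i) s
  symm := by
    constructor
    intro i j h
    obtain ⟨hne, ht⟩ := h
    refine ⟨hne.symm, ?_⟩
    rcases lt_or_gt_of_ne hne with hlt | hlt
    · rw [if_neg (asymm hlt)]
      rwa [if_pos hlt] at ht
    · rw [if_pos hlt]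
      rwa [if_neg (asymm hlt)] at ht
  loopless := by constructor; intro i h; exact h.1 rfl

/-- The standard normal cumulative distribution function `Φ`. -/
noncomputable def Phi (x : ℝ) : ℝ := ((gaussianReal 0 1) (Set.Iic x)).toReal

/-! Almost surely, any at most `d` of the vectors `X_{i,j}` are linearly independent, and the
inner products of linearly independent vectors with a suitable unit vector can be prescribed up
to a positive factor. Hence for a graph `H` with at most `d` edges, almost surely one direction
`s` makes every edge of `H` an edge of `Γ(X_n, s)` and another makes none of them one. Taking for
`H` a `k'`-clique gives `χ ≥ k'`; taking for `H` the disjoint union of `k` cliques of size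
`⌈n/k⌉` confines `Γ(X_n, s)` to a complete `k`-partite graph, so `χ ≤ k`. -/

open scoped RealInnerProductSpace
open Module Finset SimpleGraph

lemma measure_setOf_eq_one_of_ae {α : Type*} [MeasurableSpace α] {μ : Measure α}
    [IsProbabilityMeasure μ] {p : α → Prop} (h : ∀ᵐ x ∂μ, p x) : μ {x | p x} = 1 :=
  (measure_congr (eventuallyEq_univ.2 h)).trans measure_univ

section LinearIndependence

variable {E : Type*} [NormedAddCommGroup E]

theorem ProbabilityTheory.stdGaussian_coe_submodule_eq_zero [InnerProductSpace ℝ E]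
    [FiniteDimensional ℝ E] [MeasurableSpace E] [BorelSpace E] {W : Submodule ℝ E}
    (hW : W ≠ ⊤) : stdGaussian E W = 0 := by
  -- `W` lies in the hyperplane `v⊥`, and `⟪v, ·⟫` is a non-degenerate, hence atomless, Gaussian.
  obtain ⟨v, hvW, hv⟩ := (Submodule.ne_bot_iff _).1 (Submodule.orthogonal_eq_bot_iff.not.2 hW)
  let L : StrongDual ℝ E := innerSL ℝ v
  have hL : L ≠ 0 := fun h => hv (by simpa [L] using congrArg (fun L => L v) h)
  have hvar : (Var[L; stdGaussian E]).toNNReal ≠ 0 := by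
    simp [variance_dual_stdGaussian, hL]
  have := nullSingletonClass_gaussianReal (μ := (stdGaussian E)[L]) hvar
  refine measure_mono_null (t := L ⁻¹' {0}) (fun w hw => ?_) ?_
  · exact Submodule.inner_left_of_mem_orthogonal hw hvW
  · rw [← Measure.map_apply L.continuous.measurable (measurableSet_singleton 0),
      IsGaussian.map_eq_gaussianReal]
    exact measure_singleton 0

variable [NormedSpace ℝ E] [FiniteDimensional ℝ E] [MeasurableSpace E] [BorelSpace E]
  {μ : Measure E} [SigmaFinite μ]

theorem ae_linearIndependent_pi_fin (hμ : ∀ W : Submodule ℝ E, W ≠ ⊤ → μ W = 0) :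
    ∀ {m : ℕ}, m ≤ finrank ℝ E →
      ∀ᵐ Y ∂Measure.pi (fun _ : Fin m => μ), LinearIndependent ℝ Y
  | 0, _ => .of_forall fun _ => linearIndependent_empty_type
  | m + 1, hm => by
    let e := MeasurableEquiv.piFinSuccAbove (fun _ : Fin (m + 1) => E) 0
    have he : ∀ p, e.symm p = Fin.cons p.1 p.2 := fun p => by
      simp [e, MeasurableEquiv.piFinSuccAbove, Fin.insertNthEquiv]
    have hmeas : MeasurableSet
        {p : E × (Fin m → E) | LinearIndependent ℝ (Fin.cons p.1 p.2 : Fin (m + 1) → E)} := by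
      simp_rw [← he]
      exact e.symm.measurable isOpen_setOfPred_linearIndependent.measurableSet
    suffices ∀ᵐ p ∂μ.prod (Measure.pi fun _ : Fin m => μ), LinearIndependent ℝ (e.symm p) from
      ((measurePreserving_piFinSuccAbove (fun _ => μ) 0).quasiMeasurePreserving.ae this).mono
        fun Y hY => by rwa [e.symm_apply_apply] at hY
    simp_rw [he]
    -- Fubini: once the last `m` vectors are independent, the first one must avoid their span.
    rw [Measure.ae_prod_iff_ae_ae hmeas, Measure.ae_ae_comm hmeas]
    filter_upwards [ae_linearIndependent_pi_fin hμ (m := m) (by omega)] with Y hY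
    have hspan : Submodule.span ℝ (Set.range Y) ≠ ⊤ := fun htop => by
      have := finrank_le_of_span_eq_top htop
      simp only [Fintype.card_fin] at this
      omega
    filter_upwards [measure_eq_zero_iff_ae_notMem.1 (hμ _ hspan)] with x hx
    exact linearIndependent_finCons.2 ⟨hY, hx⟩

theorem ae_linearIndependent_pi {ι : Type*} [Fintype ι]
    (hμ : ∀ W : Submodule ℝ E, W ≠ ⊤ → μ W = 0) (hι : Fintype.card ι ≤ finrank ℝ E) :
    ∀ᵐ Y ∂Measure.pi (fun _ : ι => μ), LinearIndependent ℝ Y := by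
  let e := (Fintype.equivFin ι).symm
  have hφ := (measurePreserving_piCongrLeft (α := fun _ : ι => E) (fun _ => μ) e).symm
  filter_upwards [hφ.quasiMeasurePreserving.ae (ae_linearIndependent_pi_fin hμ hι)] with Y hY
  exact (linearIndependent_equiv e).1 hY

end LinearIndependence

section InnerProducts

variable {ι E : Type*} [Finite ι] [NormedAddCommGroup E] [InnerProductSpace ℝ E] {Y : ι → E}

theorem LinearIndependent.exists_inner_eq (hY : LinearIndependent ℝ Y) (c : ι → ℝ) :
    ∃ s : E, ∀ i, ⟪Y i, s⟫ = c i := by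
  let W := Submodule.span ℝ (Set.range Y)
  have : FiniteDimensional ℝ W := FiniteDimensional.span_of_finite ℝ (Set.finite_range Y)
  let φ : StrongDual ℝ W := LinearMap.toContinuousLinearMap ((Basis.span hY).constr ℝ c)
  refine ⟨(InnerProductSpace.toDual ℝ W).symm φ, fun i => ?_⟩
  have hYi : Y i = (Basis.span hY i : E) := by simp [Basis.span_apply]
  rw [real_inner_comm, hYi, ← Submodule.coe_inner, InnerProductSpace.toDual_symm_apply]
  exact (Basis.span hY).constr_basis ℝ c i

theorem LinearIndependent.exists_norm_eq_one_inner_eq_mul [Nontrivial E]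
    (hY : LinearIndependent ℝ Y) {c : ι → ℝ} (hc : ∀ i, c i ≠ 0) :
    ∃ s : E, ‖s‖ = 1 ∧ ∃ r : ℝ, 0 < r ∧ ∀ i, ⟪Y i, s⟫ = r * c i := by
  obtain ⟨s, hs⟩ := hY.exists_inner_eq c
  rcases eq_or_ne s 0 with rfl | hs0
  · have : IsEmpty ι := ⟨fun i => hc i (by simpa using (hs i).symm)⟩
    obtain ⟨u, hu⟩ := exists_norm_eq E zero_le_one
    exact ⟨u, hu, 1, one_pos, isEmptyElim⟩
  · refine ⟨‖s‖⁻¹ • s, norm_smul_inv_norm hs0, ‖s‖⁻¹, by positivity, fun i => ?_⟩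
    rw [real_inner_smul_right, hs]

end InnerProducts

section Counting

theorem two_mul_card_edgeFinset_le {V : Type*} [Fintype V] (G : SimpleGraph V)
    [DecidableRel G.Adj] {D : ℕ} (h : ∀ v, G.degree v ≤ D) :
    2 * #G.edgeFinset ≤ Fintype.card V * D := by
  rw [← sum_degrees_eq_twice_card_edges]
  calc ∑ v, G.degree v ≤ ∑ _ : V, D := sum_le_sum fun v _ => h v
    _ = Fintype.card V * D := by simp

theorem degree_compl_comap_top_le {V α β : Type*} [Fintype V] [Fintype β] (g : V ↪ α × β)
    [DecidableRel ((⊤ : SimpleGraph α).comap (Prod.fst ∘ g))ᶜ.Adj] (v : V) :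
    ((⊤ : SimpleGraph α).comap (Prod.fst ∘ g))ᶜ.degree v ≤ Fintype.card β - 1 := by
  classical
  have hG {w : V}
      (hw : w ∈ (((⊤ : SimpleGraph α).comap (Prod.fst ∘ g))ᶜ.neighborFinset v : Set V)) :
      v ≠ w ∧ (g v).1 = (g w).1 := by
    simpa using hw
  rw [← card_neighborFinset_eq_degree, ← card_univ, ← card_erase_of_mem (mem_univ (g v).2)]
  refine card_le_card_of_injOn (fun w => (g w).2) (fun w hw => ?_) fun w hw w' hw' h => ?_
  · exact mem_erase.2 ⟨fun h => (hG hw).1 (g.injective (Prod.ext (hG hw).2 h.symm)), mem_univ _⟩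
  · exact g.injective (Prod.ext ((hG hw).2.symm.trans (hG hw').2) h)

end Counting

section Shattering

variable {n d : ℕ}

lemma stdGaussian_eq (d : ℕ) :
    stdGaussian d = ProbabilityTheory.stdGaussian (EuclideanSpace ℝ (Fin d)) :=
  map_pi_eq_stdGaussian

instance (d : ℕ) : IsProbabilityMeasure (stdGaussian d) := stdGaussian_eq d ▸ inferInstance

instance : IsProbabilityMeasure (edgeMeasure n d) := by unfold edgeMeasure; infer_instance

/-- `X_{i,j}` for the edge `{i, j}` with `i ≤ j`: as in `Gamma`, only the upper triangle of `X`
is read. -/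
def edgeVec {E : Type*} (X : Fin n → Fin n → E) (e : Sym2 (Fin n)) : E := X e.inf e.sup

lemma gamma_adj_iff (X : Fin n → Fin n → EuclideanSpace ℝ (Fin d))
    (s : EuclideanSpace ℝ (Fin d)) (t : ℝ) {i j : Fin n} :
    (Gamma X s t).Adj i j ↔ i ≠ j ∧ t ≤ ⟪edgeVec X s(i, j), s⟫ := by
  rcases lt_trichotomy i j with h | rfl | h
  · simp [_root_.Gamma, edgeVec, h, h.le]
  · simp [_root_.Gamma]
  · simp [_root_.Gamma, edgeVec, h.ne', h.le, not_lt_of_gt h]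

lemma iIndepFun_edgeMeasure :
    iIndepFun (fun (p : Fin n × Fin n) (X : Fin n → Fin n → EuclideanSpace ℝ (Fin d)) =>
      X p.1 p.2) (edgeMeasure n d) := by
  have := iIndepFun_uncurry_infinitePi' (fun (_ : Fin n) (_ : Fin n) => stdGaussian d)
    (X := fun _ _ => id) (fun _ _ => measurable_id)
  simp only [Measure.infinitePi_eq_pi] at this
  exact this

lemma map_edgeVec_edgeMeasure (e : Sym2 (Fin n)) :
    (edgeMeasure n d).map (fun X => edgeVec X e) = stdGaussian d :=
  ((measurePreserving_eval (fun _ => stdGaussian d) e.sup).comp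
    (measurePreserving_eval (fun _ => Measure.pi fun _ => stdGaussian d) e.inf)).map_eq

lemma ae_linearIndependent_edgeVec (H : SimpleGraph (Fin n)) [DecidableRel H.Adj]
    (hH : #H.edgeFinset ≤ d) :
    ∀ᵐ X ∂edgeMeasure n d, LinearIndependent ℝ fun e : H.edgeSet => edgeVec X e := by
  have hinj : Function.Injective
      fun e : H.edgeSet => ((e : Sym2 (Fin n)).inf, (e : Sym2 (Fin n)).sup) :=
    fun e e' h => Subtype.ext (Sym2.inf_eq_inf_and_sup_eq_sup.1 (Prod.ext_iff.1 h))
  have hmeas (e : Sym2 (Fin n)) :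
      Measurable fun X : Fin n → Fin n → EuclideanSpace ℝ (Fin d) => edgeVec X e :=
    (measurable_pi_apply _).comp (measurable_pi_apply _)
  have hind : iIndepFun (fun (e : H.edgeSet) X => edgeVec X e) (edgeMeasure n d) :=
    iIndepFun_edgeMeasure.precomp hinj
  have hmap := (iIndepFun_iff_map_fun_eq_pi_map fun e : H.edgeSet => (hmeas e).aemeasurable).1 hind
  simp only [map_edgeVec_edgeMeasure] at hmap
  refine ae_of_ae_map (p := fun Y => LinearIndependent ℝ Y)
    (measurable_pi_lambda _ fun e : H.edgeSet => hmeas e).aemeasurable ?_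
  rw [hmap]
  refine ae_linearIndependent_pi (fun W hW => ?_) ?_
  · rw [stdGaussian_eq]
    exact stdGaussian_coe_submodule_eq_zero hW
  · rwa [finrank_euclideanSpace_fin, ← edgeFinset_card]

theorem ae_exists_inner_edgeVec_eq_mul (hd : 0 < d) (H : SimpleGraph (Fin n))
    [DecidableRel H.Adj] (hH : #H.edgeFinset ≤ d) {c : ℝ} (hc : c ≠ 0) :
    ∀ᵐ X ∂edgeMeasure n d, ∃ s : EuclideanSpace ℝ (Fin d), ‖s‖ = 1 ∧
      ∃ r : ℝ, 0 < r ∧ ∀ e ∈ H.edgeSet, ⟪edgeVec X e, s⟫ = r * c := by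
  have : Nontrivial (EuclideanSpace ℝ (Fin d)) :=
    Module.nontrivial_of_finrank_pos (R := ℝ) (by simpa using hd)
  filter_upwards [ae_linearIndependent_edgeVec H hH] with X hX
  obtain ⟨s, hs, r, hr, h⟩ := hX.exists_norm_eq_one_inner_eq_mul fun _ => hc
  exact ⟨s, hs, r, hr, fun e he => h ⟨e, he⟩⟩

theorem ae_exists_le_gamma (hd : 0 < d) (H : SimpleGraph (Fin n)) [DecidableRel H.Adj]
    (hH : #H.edgeFinset ≤ d) :
    ∀ᵐ X ∂edgeMeasure n d, ∃ s : EuclideanSpace ℝ (Fin d), ‖s‖ = 1 ∧ H ≤ Gamma X s 0 := by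
  filter_upwards [ae_exists_inner_edgeVec_eq_mul hd H hH one_ne_zero] with X ⟨s, hs, r, hr, h⟩
  refine ⟨s, hs, fun i j hij => (gamma_adj_iff X s 0).2 ⟨hij.ne, ?_⟩⟩
  rw [h _ hij]
  positivity

theorem ae_exists_gamma_le (hd : 0 < d) (G : SimpleGraph (Fin n)) [DecidableRel G.Adj]
    (hG : #Gᶜ.edgeFinset ≤ d) :
    ∀ᵐ X ∂edgeMeasure n d, ∃ s : EuclideanSpace ℝ (Fin d), ‖s‖ = 1 ∧ Gamma X s 0 ≤ G := by
  filter_upwards [ae_exists_inner_edgeVec_eq_mul hd Gᶜ hG (neg_ne_zero.2 one_ne_zero)]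
    with X ⟨s, hs, r, hr, h⟩
  refine ⟨s, hs, fun i j hij => ?_⟩
  obtain ⟨hne, hinner⟩ := (gamma_adj_iff X s 0).1 hij
  by_contra hG
  rw [h s(i, j) ((mem_edgeSet _).2 ((compl_adj G i j).2 ⟨hne, hG⟩))] at hinner
  linarith

theorem ae_exists_chromaticNumber_le (hd : 0 < d) {k : ℕ} (hk : 0 < k)
    (h : k * (n ⌈/⌉ k).choose 2 ≤ d) :
    ∀ᵐ X ∂edgeMeasure n d, ∃ s : EuclideanSpace ℝ (Fin d), ‖s‖ = 1 ∧
      (Gamma X s 0).chromaticNumber ≤ k := by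
  classical
  set q := n ⌈/⌉ k
  have hnq : n ≤ k * q := le_smul_ceilDiv hk
  let g : Fin n ↪ Fin k × Fin q := (Fin.castLEEmb hnq).trans finProdFinEquiv.symm.toEmbedding
  -- `g` cuts `Fin n` into `k` blocks of at most `q` vertices; `G` joins different blocks.
  let G := (⊤ : SimpleGraph (Fin k)).comap (Prod.fst ∘ g)
  have hG : #Gᶜ.edgeFinset ≤ d := by
    have : 2 * #Gᶜ.edgeFinset ≤ 2 * (k * q.choose 2) := calc
      2 * #Gᶜ.edgeFinset ≤ n * (q - 1) := by
        simpa using two_mul_card_edgeFinset_le _ (degree_compl_comap_top_le g)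
      _ ≤ k * q * (q - 1) := Nat.mul_le_mul_right _ hnq
      _ = 2 * (k * q.choose 2) := by
        rw [Nat.choose_two_right, mul_left_comm, Nat.mul_div_cancel' q.even_mul_pred_self.two_dvd,
          mul_assoc]
    omega
  filter_upwards [ae_exists_gamma_le hd G hG] with X ⟨s, hs, hle⟩
  refine ⟨s, hs, ?_⟩
  have hcol : G.Coloring (Fin k) := Coloring.mk (Prod.fst ∘ g) fun h => h
  simpa using (hcol.colorable.mono_left hle).chromaticNumber_le

theorem ae_exists_le_chromaticNumber (hd : 0 < d) {k : ℕ} (hkn : k ≤ n) (h : k.choose 2 ≤ d) :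
    ∀ᵐ X ∂edgeMeasure n d, ∃ s : EuclideanSpace ℝ (Fin d), ‖s‖ = 1 ∧
      k ≤ (Gamma X s 0).chromaticNumber := by
  classical
  let K := (⊤ : SimpleGraph (Fin k)).map (Fin.castLEEmb hkn)
  have hK : #K.edgeFinset ≤ d := calc
    #K.edgeFinset = #(⊤ : SimpleGraph (Fin k)).edgeFinset := by
      convert card_edgeFinset_map (Fin.castLEEmb hkn) ⊤
    _ = k.choose 2 := by rw [card_edgeFinset_top_eq_card_choose_two, Fintype.card_fin]
    _ ≤ d := h
  filter_upwards [ae_exists_le_gamma hd K hK] with X ⟨s, hs, hle⟩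
  refine ⟨s, hs, ?_⟩
  calc (k : ℕ∞) = (⊤ : SimpleGraph (Fin k)).chromaticNumber := by simp [chromaticNumber_top]
    _ ≤ K.chromaticNumber := chromaticNumber_mono_of_hom (Embedding.map _ _).toHom
    _ ≤ (Gamma X s 0).chromaticNumber := chromaticNumber_mono _ hle

end Shattering

theorem chromatic_shattering_general (n d k k' : ℕ)
    (hk : 0 < k) (hk'n : k' ≤ n) (hd0 : 0 < d) :
    (k * Nat.choose ((n + k - 1) / k) 2 ≤ d →
      edgeMeasure n d
        {X | ∃ s : EuclideanSpace ℝ (Fin d), ‖s‖ = 1 ∧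
          (Gamma X s 0).chromaticNumber ≤ (k : ℕ∞)} = 1) ∧
    (Nat.choose k' 2 ≤ d →
      edgeMeasure n d
        {X | ∃ s : EuclideanSpace ℝ (Fin d), ‖s‖ = 1 ∧
          (k' : ℕ∞) ≤ (Gamma X s 0).chromaticNumber} = 1) :=
  ⟨fun hd => measure_setOf_eq_one_of_ae (ae_exists_chromaticNumber_le hd0 hk hd),
    fun hd => measure_setOf_eq_one_of_ae (ae_exists_le_chromaticNumber hd0 hk'n hd)⟩

/-- If `d ≥ k·C(⌈n/k⌉, 2)` then with probability one some unit vector `s` has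
`χ(Γ(X_n, s)) ≤ k`; if `d ≥ C(k', 2)` then with probability one some unit vector `s` has
`χ(Γ(X_n, s)) ≥ k'`. -/
theorem chromatic_shattering (n d k k' : ℕ)
    (hk : 0 < k) (hk' : 0 < k') (hkn : k ≤ n) (hk'n : k' ≤ n) (hd0 : 0 < d) :
    (k * Nat.choose ((n + k - 1) / k) 2 ≤ d →
      edgeMeasure n d
        {X | ∃ s : EuclideanSpace ℝ (Fin d), ‖s‖ = 1 ∧
          (Gamma X s 0).chromaticNumber ≤ (k : ℕ∞)} = 1) ∧
    (Nat.choose k' 2 ≤ d →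
      edgeMeasure n d
        {X | ∃ s : EuclideanSpace ℝ (Fin d), ‖s‖ = 1 ∧
          (k' : ℕ∞) ≤ (Gamma X s 0).chromaticNumber} = 1) :=
  chromatic_shattering_general n d k k' hk hk'n hd0
end

section
/- For all r > 0 and h ≥ 0, one has exp(−hr − h/r − h²/2) ≤ (1 − Φ(r+h))/(1 − Φ(r)) ≤ exp(−hr − h²/2), where Φ is the standard normal distribution function. -/
open MeasureTheory ProbabilityTheory Real Filter

/-! With `Q x = ∫_x^∞ φ` the Gaussian tail, `Q' = -φ`. Comparing `Q` with
`∫_x^∞ u φ(u) du = φ(x)` and `∫_x^∞ (1 + u⁻²) φ(u) du = φ(x) / x` gives the Mills-ratio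
bounds `x Q(x) ≤ φ(x) ≤ (x + 1/x) Q(x)` (the second for `x > 0`). These say exactly that
`t ↦ Q(r + t) exp(rt + t²/2)` is nonincreasing and `t ↦ Q(r + t) exp(rt + t/r + t²/2)` is
nondecreasing for `t ≥ 0`; comparing `t = h` with `t = 0` gives the two bounds. -/

open Set Topology

lemma hasDerivAt_integral_Ioi {f : ℝ → ℝ} (hf : Continuous f) (hfi : Integrable f) (x : ℝ) :
    HasDerivAt (fun y ↦ ∫ u in Ioi y, f u) (-f x) x := by
  have hsplit : (fun y ↦ ∫ u in Ioi y, f u) =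
      fun y ↦ (∫ u in Ioi 0, f u) - ∫ u in (0)..y, f u := by
    funext y
    rw [← intervalIntegral.integral_Ioi_sub_Ioi' hfi.integrableOn hfi.integrableOn]
    ring
  rw [hsplit]
  exact ((hf.integral_hasStrictDerivAt 0 x).hasDerivAt).const_sub _

section MulExp

variable {f f' E E' : ℝ → ℝ} {s : Set ℝ}

lemma monotoneOn_mul_exp_of_hasDerivAt (hs : Convex ℝ s) (hf : ∀ t, HasDerivAt f (f' t) t)
    (hE : ∀ t, HasDerivAt E (E' t) t) (h : ∀ t ∈ interior s, 0 ≤ f' t + E' t * f t) :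
    MonotoneOn (fun t ↦ f t * exp (E t)) s := by
  have hd : ∀ t, HasDerivAt (fun t ↦ f t * exp (E t)) ((f' t + E' t * f t) * exp (E t)) t :=
    fun t ↦ ((hf t).mul (hE t).exp).congr_deriv (by ring)
  refine monotoneOn_of_deriv_nonneg hs (fun t _ ↦ (hd t).continuousAt.continuousWithinAt)
    (fun t _ ↦ (hd t).differentiableAt.differentiableWithinAt) fun t ht ↦ ?_
  rw [(hd t).deriv]
  exact mul_nonneg (h t ht) (exp_pos _).le

lemma antitoneOn_mul_exp_of_hasDerivAt (hs : Convex ℝ s) (hf : ∀ t, HasDerivAt f (f' t) t)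
    (hE : ∀ t, HasDerivAt E (E' t) t) (h : ∀ t ∈ interior s, f' t + E' t * f t ≤ 0) :
    AntitoneOn (fun t ↦ f t * exp (E t)) s := by
  have hneg := monotoneOn_mul_exp_of_hasDerivAt (f := fun t ↦ -f t) (f' := fun t ↦ -f' t) hs
    (fun t ↦ (hf t).neg) hE fun t ht ↦ by linarith [h t ht]
  intro a ha b hb hab
  simpa using hneg ha hb hab

end MulExp

noncomputable def stdNormalPDF (x : ℝ) : ℝ := (√(2 * π))⁻¹ * exp (-x ^ 2 / 2)

noncomputable def stdNormalTail (x : ℝ) : ℝ := ∫ u in Ioi x, stdNormalPDF u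

lemma gaussianPDFReal_zero_one : gaussianPDFReal 0 1 = stdNormalPDF := by
  funext x
  simp [gaussianPDFReal, stdNormalPDF]

lemma stdNormalPDF_pos (x : ℝ) : 0 < stdNormalPDF x := by
  unfold stdNormalPDF
  positivity

lemma continuous_stdNormalPDF : Continuous stdNormalPDF := by
  unfold stdNormalPDF
  fun_prop

lemma integrable_stdNormalPDF : Integrable stdNormalPDF :=
  gaussianPDFReal_zero_one ▸ integrable_gaussianPDFReal 0 1

lemma integrable_mul_stdNormalPDF : Integrable fun x ↦ x * stdNormalPDF x := by
  have := (integrable_mul_exp_neg_mul_sq (b := 1 / 2) (by norm_num)).const_mul (√(2 * π))⁻¹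
  refine this.congr (ae_of_all _ fun x ↦ ?_)
  simp only [stdNormalPDF]
  ring_nf

lemma hasDerivAt_stdNormalPDF (x : ℝ) :
    HasDerivAt stdNormalPDF (-(x * stdNormalPDF x)) x := by
  have hquad : HasDerivAt (fun y : ℝ ↦ -y ^ 2 / 2) (-x) x :=
    ((hasDerivAt_pow 2 x).fun_neg.div_const 2).congr_deriv (by ring)
  exact (hquad.exp.const_mul (√(2 * π))⁻¹).congr_deriv (by rw [stdNormalPDF]; ring)

lemma tendsto_stdNormalPDF_atTop : Tendsto stdNormalPDF atTop (𝓝 0) := by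
  have hquad : Tendsto (fun x : ℝ ↦ -x ^ 2 / 2) atTop atBot :=
    (tendsto_neg_atBot_iff.2 (tendsto_pow_atTop two_ne_zero)).atBot_div_const two_pos
  have h := (tendsto_exp_atBot.comp hquad).const_mul (√(2 * π))⁻¹
  rwa [mul_zero] at h

lemma one_sub_Phi_eq_stdNormalTail (x : ℝ) : 1 - Phi x = stdNormalTail x := by
  have hnonneg : 0 ≤ stdNormalTail x :=
    setIntegral_nonneg measurableSet_Ioi fun u _ ↦ (stdNormalPDF_pos u).le
  rw [Phi, ← measureReal_def, ← probReal_compl_eq_one_sub measurableSet_Iic, compl_Iic,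
    measureReal_def, gaussianReal_apply_eq_integral 0 one_ne_zero, gaussianPDFReal_zero_one,
    ← stdNormalTail, ENNReal.toReal_ofReal hnonneg]

lemma stdNormalTail_pos (x : ℝ) : 0 < stdNormalTail x := by
  have hsupp : Function.support stdNormalPDF = univ :=
    Function.support_eq_univ fun u ↦ (stdNormalPDF_pos u).ne'
  rw [stdNormalTail, setIntegral_pos_iff_support_of_nonneg_ae
    (ae_of_all _ fun u ↦ (stdNormalPDF_pos u).le) integrable_stdNormalPDF.integrableOn, hsupp,
    univ_inter]
  simp

lemma hasDerivAt_stdNormalTail (x : ℝ) :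
    HasDerivAt stdNormalTail (-stdNormalPDF x) x :=
  hasDerivAt_integral_Ioi continuous_stdNormalPDF integrable_stdNormalPDF x

lemma mul_stdNormalTail_le (x : ℝ) : x * stdNormalTail x ≤ stdNormalPDF x := by
  have hmoment : ∫ u in Ioi x, u * stdNormalPDF u = stdNormalPDF x := by
    have := integral_Ioi_of_hasDerivAt_of_tendsto' (a := x) (m := 0)
      (f := fun u ↦ -stdNormalPDF u)
      (fun u _ ↦ (hasDerivAt_stdNormalPDF u).neg.congr_deriv (neg_neg _))
      integrable_mul_stdNormalPDF.integrableOn (by simpa using tendsto_stdNormalPDF_atTop.neg)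
    simpa using this
  rw [← hmoment, stdNormalTail, ← integral_const_mul]
  exact setIntegral_mono_on (integrable_stdNormalPDF.const_mul x).integrableOn
    integrable_mul_stdNormalPDF.integrableOn measurableSet_Ioi
    fun u hu ↦ mul_le_mul_of_nonneg_right (le_of_lt hu) (stdNormalPDF_pos u).le

lemma stdNormalPDF_le_mul_stdNormalTail {x : ℝ} (hx : 0 < x) :
    stdNormalPDF x ≤ (x + x⁻¹) * stdNormalTail x := by
  set w : ℝ → ℝ := fun u ↦ (1 + (u ^ 2)⁻¹) * stdNormalPDF u
  have hderiv : ∀ u ∈ Ici x, HasDerivAt (fun u ↦ -(stdNormalPDF u / u)) (w u) u := by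
    intro u hu
    have hu0 : u ≠ 0 := (hx.trans_le hu).ne'
    refine ((hasDerivAt_stdNormalPDF u).div (hasDerivAt_id u) hu0).neg.congr_deriv ?_
    simp only [w, id]
    field_simp
    ring
  have hw_nonneg : ∀ u ∈ Ioi x, 0 ≤ w u := fun u _ ↦ by
    have := stdNormalPDF_pos u
    positivity
  have hlim : Tendsto (fun u ↦ -(stdNormalPDF u / u)) atTop (𝓝 0) := by
    simpa using (tendsto_stdNormalPDF_atTop.div_atTop tendsto_id).neg
  have hw_int : IntegrableOn w (Ioi x) :=
    integrableOn_Ioi_deriv_of_nonneg' hderiv hw_nonneg hlim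
  have hw_integral : ∫ u in Ioi x, w u = stdNormalPDF x / x := by
    simpa using integral_Ioi_of_hasDerivAt_of_nonneg' hderiv hw_nonneg hlim
  have hw_le : stdNormalPDF x / x ≤ (1 + (x ^ 2)⁻¹) * stdNormalTail x := by
    rw [← hw_integral, stdNormalTail, ← integral_const_mul]
    refine setIntegral_mono_on hw_int (integrable_stdNormalPDF.const_mul _).integrableOn
      measurableSet_Ioi fun u hu ↦ ?_
    have := stdNormalPDF_pos u
    simp only [w]
    gcongr
    exact hu.le
  calc stdNormalPDF x = x * (stdNormalPDF x / x) := by field_simp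
    _ ≤ x * ((1 + (x ^ 2)⁻¹) * stdNormalTail x) := by gcongr
    _ = (x + x⁻¹) * stdNormalTail x := by field_simp

lemma hasDerivAt_stdNormalTail_const_add (r t : ℝ) :
    HasDerivAt (fun t ↦ stdNormalTail (r + t)) (-stdNormalPDF (r + t)) t :=
  (hasDerivAt_stdNormalTail (r + t)).comp_const_add r t

lemma antitone_stdNormalTail_mul_exp (r : ℝ) :
    Antitone fun t ↦ stdNormalTail (r + t) * exp (t * r + t ^ 2 / 2) := by
  have hE : ∀ t : ℝ, HasDerivAt (fun t ↦ t * r + t ^ 2 / 2) (r + t) t := fun t ↦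
    (((hasDerivAt_id t).mul_const r).add ((hasDerivAt_pow 2 t).div_const 2)).congr_deriv
      (by ring)
  refine antitoneOn_univ.1 (antitoneOn_mul_exp_of_hasDerivAt convex_univ
    (hasDerivAt_stdNormalTail_const_add r) hE fun t _ ↦ ?_)
  linarith [mul_stdNormalTail_le (r + t)]

lemma monotoneOn_stdNormalTail_mul_exp {r : ℝ} (hr : 0 < r) :
    MonotoneOn (fun t ↦ stdNormalTail (r + t) * exp (t * r + t / r + t ^ 2 / 2)) (Ici 0) := by
  have hE : ∀ t : ℝ, HasDerivAt (fun t ↦ t * r + t / r + t ^ 2 / 2) (r + r⁻¹ + t) t :=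
    fun t ↦ ((((hasDerivAt_id t).mul_const r).add ((hasDerivAt_id t).div_const r)).add
      ((hasDerivAt_pow 2 t).div_const 2)).congr_deriv (by ring)
  refine monotoneOn_mul_exp_of_hasDerivAt (convex_Ici 0)
    (hasDerivAt_stdNormalTail_const_add r) hE fun t ht ↦ ?_
  rw [interior_Ici, mem_Ioi] at ht
  have hrt : 0 < r + t := by linarith
  have hinv : (r + t)⁻¹ ≤ r⁻¹ := inv_anti₀ hr (by linarith)
  have hmills := stdNormalPDF_le_mul_stdNormalTail hrt
  nlinarith [stdNormalTail_pos (r + t)]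

/-- Gaussian tail ratio bounds: for `r > 0` and `h ≥ 0`,
`exp(−hr − h/r − h²/2) ≤ (1 − Φ(r+h))/(1 − Φ(r)) ≤ exp(−hr − h²/2)`. -/
theorem gaussian_tail_ratio (r h : ℝ) (hr : 0 < r) (hh : 0 ≤ h) :
    Real.exp (-(h * r) - h / r - h ^ 2 / 2)
        ≤ (1 - Phi (r + h)) / (1 - Phi r) ∧
      (1 - Phi (r + h)) / (1 - Phi r)
        ≤ Real.exp (-(h * r) - h ^ 2 / 2) := by
  rw [one_sub_Phi_eq_stdNormalTail, one_sub_Phi_eq_stdNormalTail]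
  have hQ := stdNormalTail_pos r
  have hlower := monotoneOn_stdNormalTail_mul_exp hr self_mem_Ici hh hh
  have hupper := antitone_stdNormalTail_mul_exp r hh
  simp only [add_zero, zero_mul, zero_div, zero_pow two_ne_zero, exp_zero, mul_one]
    at hlower hupper
  constructor
  · rw [le_div_iff₀ hQ, show -(h * r) - h / r - h ^ 2 / 2 = -(h * r + h / r + h ^ 2 / 2) by ring,
      exp_neg, inv_mul_le_iff₀ (exp_pos _), mul_comm]
    exact hlower
  · rw [div_le_iff₀ hQ, show -(h * r) - h ^ 2 / 2 = -(h * r + h ^ 2 / 2) by ring, exp_neg,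
      ← div_eq_inv_mul, le_div_iff₀ (exp_pos _)]
    exact hupper
end
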